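/- In the Hilbert-style system GR, the formula □p ∧ ■q ⊃ (□⊥ ∨ ■(p ∧ q)) is derivable, and hence □p ∧ ■q ⊃ □(p ∧ q) is derivable. -/

import Mathlib

/-- Formulas of the bimodal logic GR: propositional variables, ⊥, ¬, ∧,
Gödel box `box` (□) and Rosser box `rbox` (■). -/
inductive GRFormula : Type
  | var : Nat → GRFormula
  | bot : GRFormula
  | neg : GRFormula → GRFormula
  | and : GRFormula → GRFormula → GRFormula
  | box : GRFormula → GRFormula
  | rbox : GRFormula → GRFormula

namespace GRFormula

/-- A ⊃ B defined as ¬(A ∧ ¬B). -/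
def impl (A B : GRFormula) : GRFormula := neg (and A (neg B))

/-- A ∨ B defined as ¬(¬A ∧ ¬B). -/
def or (A B : GRFormula) : GRFormula := neg (and (neg A) (neg B))

/-- ◇A := ¬□¬A. -/
def dia (A : GRFormula) : GRFormula := neg (box (neg A))

/-- A ≡ B := (A ⊃ B) ∧ (B ⊃ A). -/
def iff (A B : GRFormula) : GRFormula := and (impl A B) (impl B A)

/-- ⊤ := ¬⊥. -/
def top : GRFormula := neg bot

/-- Propositional tautology: true under every boolean valuation that
respects ⊥, ¬, ∧ (treating modal formulas as atoms). -/
def IsTaut (A : GRFormula) : Prop :=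
  ∀ v : GRFormula → Bool,
    v bot = false →
    (∀ B, v (neg B) = !v B) →
    (∀ B C, v (and B C) = (v B && v C)) →
    v A = true

end GRFormula

open GRFormula

/-- Hilbert-style derivability in the bimodal logic GR. -/
inductive GRProof : GRFormula → Prop
  | taut {A} : IsTaut A → GRProof A
  | axK (A B) : GRProof (impl (box (impl A B)) (impl (box A) (box B)))
  | axLob (A) : GRProof (impl (box (impl (box A) A)) (box A))
  | axRG (A) : GRProof (impl (rbox A) (box A))
  | axGGR (A) : GRProof (impl (box A) (box (rbox A)))
  | axGR (A) : GRProof (impl (box A) (or (box bot) (rbox A)))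
  | axDia (A) : GRProof (impl (dia (rbox A)) (dia A))
  | mp {A B} : GRProof (impl A B) → GRProof A → GRProof B
  | nec {A} : GRProof A → GRProof (box A)
  | conec {A} : GRProof (box A) → GRProof A

namespace GRFormula

theorem isTaut_impl_impl_and (A B : GRFormula) : IsTaut (impl A (impl B (and A B))) := by
  intro v _ hn ha
  simp only [impl, hn, ha]
  cases v A <;> cases v B <;> rfl

theorem isTaut_impl_trans (A B C : GRFormula) :
    IsTaut (impl (impl A B) (impl (impl B C) (impl A C))) := by
  intro v _ hn ha
  simp only [impl, hn, ha]
  cases v A <;> cases v B <;> cases v C <;> rfl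

theorem isTaut_uncurry (A B C : GRFormula) :
    IsTaut (impl (impl A (impl B C)) (impl (and A B) C)) := by
  intro v _ hn ha
  simp only [impl, hn, ha]
  cases v A <;> cases v B <;> cases v C <;> rfl

theorem isTaut_and_mono_right (A B C : GRFormula) :
    IsTaut (impl (impl B C) (impl (and A B) (and A C))) := by
  intro v _ hn ha
  simp only [impl, hn, ha]
  cases v A <;> cases v B <;> cases v C <;> rfl

end GRFormula

namespace GRProof

variable {A B C : GRFormula}

theorem impl_trans (hAB : GRProof (impl A B)) (hBC : GRProof (impl B C)) :
    GRProof (impl A C) :=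
  mp (mp (taut (isTaut_impl_trans A B C)) hAB) hBC

theorem uncurry (h : GRProof (impl A (impl B C))) : GRProof (impl (and A B) C) :=
  mp (taut (isTaut_uncurry A B C)) h

theorem and_mono_right (h : GRProof (impl B C)) : GRProof (impl (and A B) (and A C)) :=
  mp (taut (isTaut_and_mono_right A B C)) h

variable (A B)

theorem box_and : GRProof (impl (and (box A) (box B)) (box (and A B))) :=
  uncurry <| impl_trans (mp (axK A _) (nec (taut (isTaut_impl_impl_and A B)))) (axK B _)

theorem box_and_rbox : GRProof (impl (and (box A) (rbox B)) (box (and A B))) :=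
  impl_trans (and_mono_right (axRG B)) (box_and A B)

theorem box_and_rbox_impl_or :
    GRProof (impl (and (box A) (rbox B)) (or (box bot) (rbox (and A B)))) :=
  impl_trans (box_and_rbox A B) (axGR _)

end GRProof

theorem gr_box_rbox_and :
    GRProof (impl (and (box (var 0)) (rbox (var 1)))
      (or (box bot) (rbox (and (var 0) (var 1))))) ∧
    GRProof (impl (and (box (var 0)) (rbox (var 1)))
      (box (and (var 0) (var 1)))) :=
  ⟨GRProof.box_and_rbox_impl_or _ _, GRProof.box_and_rbox _ _⟩
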